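/- arXiv:1101.3962 — 2 statements merged into one kernel-verified Lean document; each statement's English description precedes it below -/
import Mathlib

section
/- For any left Â-module E, the subset T̂_a(E) := { x ∈ E : ℂ[[b]]·x ⊂ T_a(E) } is a sub-Â-module of E, and it is the largest sub-Â-module of E contained in T_a(E). -/
/-!
If `ℂ[[b]]·x ⊂ T_a(E)`, then already `b^L·x = 0` for some `L`. This goes by induction on the
`n` with `a^n·x = 0`: since `b^ν·a = a·b^ν − ν·b^(ν+1)`, the element `a·x` again has its
`ℂ[[b]]`-orbit in `T_a(E)`, so `b^L·a·x = 0`, and then `z = b^(L+1)·x` satisfies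
`a·z = (L+1)·b·z`. Such a `z` has `a^m·z = (L+1)(L+2)⋯(L+m)·b^m·z`, so `a^m·z = 0` forces
`b^m·z = 0`. Once `b^L·x = 0`, an element `w = Σ_{ν<L} P_ν(a)·b^ν + y·b^L` of `Â` acts on `x`
through `Σ_{ν<L} P_ν(a)·b^ν·x`, which lies in `T_a(E)` because `P_ν(a)` commutes with `a`.
Hence `T̂_a(E)` is stable under `Â`; maximality is immediate.
-/

/- Axiomatized framework for Barlet's algebra `Â` and its (a,b)-modules. -/

open PowerSeries

noncomputable section

universe u v

/-- The algebra `Â` of formal series `Σ_ν P_ν(a)·b^ν` with `P_ν ∈ ℂ[[a]]`: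
a `ℂ`-algebra with two distinguished elements `a`, `b` satisfying
`a·b − b·a = b²`, containing copies of `ℂ[[a]]` and `ℂ[[b]]`, in which every
element has a unique expansion `Σ_ν P_ν(a)·b^ν` (expressed via truncations). -/
class AHatAlgebra (A : Type u) [Ring A] [Algebra ℂ A] where
  a : A
  b : A
  comm_ab : a * b - b * a = b ^ 2
  embA : PowerSeries ℂ →ₐ[ℂ] A
  embA_X : embA PowerSeries.X = a
  embB : PowerSeries ℂ →ₐ[ℂ] A
  embB_X : embB PowerSeries.X = b
  coeffb : A → ℕ → PowerSeries ℂ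
  expand : ∀ (x : A) (N : ℕ),
      ∃ y : A, x = (∑ ν ∈ Finset.range N, embA (coeffb x ν) * b ^ ν) + y * b ^ N
  coeffb_unique : ∀ (x : A) (N : ℕ) (P : ℕ → PowerSeries ℂ) (y : A),
      x = (∑ ν ∈ Finset.range N, embA (P ν) * b ^ ν) + y * b ^ N →
      ∀ ν < N, coeffb x ν = P ν

namespace AHat

variable (A : Type u) [Ring A] [Algebra ℂ A] [AHatAlgebra A]

/-- The element `a` of `Â`. -/
def av : A := AHatAlgebra.a
/-- The element `b` of `Â`. -/
def bv : A := AHatAlgebra.b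
/-- The embedding `ℂ[[a]] → Â`, `T ↦ T(a)`. -/
def eA : PowerSeries ℂ →ₐ[ℂ] A := AHatAlgebra.embA
/-- The embedding `ℂ[[b]] → Â`, `S ↦ S(b)`. -/
def eB : PowerSeries ℂ →ₐ[ℂ] A := AHatAlgebra.embB

/-- The `ℂ[[b]]`-module structure on an `Â`-module, via `S ↦ S(b)`. -/
def psMod (E : Type v) [AddCommGroup E] [Module A E] : Module (PowerSeries ℂ) E :=
  Module.compHom E (eB A).toRingHom

/-- The `ℂ`-module structure on an `Â`-module. -/
def cMod (E : Type v) [AddCommGroup E] [Module A E] : Module ℂ E :=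
  Module.compHom E (algebraMap ℂ A)

/-- A simple pole (a,b)-module : free and finitely generated over `ℂ[[b]]`
with `a·E ⊂ b·E`. -/
def IsSimplePole (E : Type v) [AddCommGroup E] [Module A E] : Prop :=
  (letI := psMod A E
   Module.Finite (PowerSeries ℂ) E ∧ Module.Free (PowerSeries ℂ) E) ∧
  ∀ x : E, ∃ y : E, av A • x = bv A • y

/-- A regular (a,b)-module : one contained in a simple pole (a,b)-module. -/
def IsRegular (E : Type v) [AddCommGroup E] [Module A E] : Prop :=
  ∃ (F : ModuleCat.{v} A) (i : E →ₗ[A] F), IsSimplePole A F ∧ Function.Injective i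

/-- Rank over `ℂ[[b]]`. -/
def bRank (E : Type v) [AddCommGroup E] [Module A E] : ℕ :=
  letI := psMod A E
  Module.finrank (PowerSeries ℂ) E

/-- Generated over `Â` by a single element. -/
def IsMonogenic (E : Type v) [AddCommGroup E] [Module A E] : Prop :=
  ∃ x : E, Submodule.span A {x} = ⊤

/-- `i : E → F` realizes `F` as the sharp `E^♯` of `E` : `F` has a simple pole,
`i` is injective, and every `Â`-linear map from `E` to a simple pole module
factors uniquely through `i`. -/
def IsSharpOf (E : Type v) [AddCommGroup E] [Module A E]
    (F : Type v) [AddCommGroup F] [Module A F] (i : E →ₗ[A] F) : Prop :=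
  IsSimplePole A F ∧ Function.Injective i ∧
  ∀ (G : ModuleCat.{v} A), IsSimplePole A G →
    ∀ f : E →ₗ[A] G, ∃! g : F →ₗ[A] G, g.comp i = f

/-- `B` is the Bernstein polynomial of the regular (a,b)-module `E` : the
minimal polynomial of `−b⁻¹·a` acting on `E^♯/b·E^♯`. -/
def IsBernsteinPolyOf (E : Type v) [AddCommGroup E] [Module A E]
    (B : Polynomial ℂ) : Prop :=
  ∃ (F : ModuleCat.{v} A) (i : E →ₗ[A] F), IsSharpOf A E F i ∧
    (letI := cMod A F
     ∃ W : Submodule ℂ F, (W : Set F) = {x : F | ∃ y : F, x = bv A • y} ∧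
       ∃ u : Module.End ℂ (F ⧸ W),
         (∀ x y : F, av A • x = bv A • y →
            u (Submodule.Quotient.mk x) = - Submodule.Quotient.mk y) ∧
         minpoly ℂ u = B)

/-- A fresco : a monogenic regular (a,b)-module whose Bernstein polynomial has
all its roots negative rational numbers. -/
def IsFresco (E : Type v) [AddCommGroup E] [Module A E] : Prop :=
  IsRegular A E ∧ IsMonogenic A E ∧
  ∃ B : Polynomial ℂ, IsBernsteinPolyOf A E B ∧
    ∀ z ∈ B.roots, ∃ q : ℚ, 0 < q ∧ z = -(q : ℂ)

/-- A `[λ]`-primitive fresco : every root of the Bernstein polynomial lies in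
`−λ−ℕ`. -/
def IsPrimitiveFresco (l : ℚ) (E : Type v) [AddCommGroup E] [Module A E] : Prop :=
  IsFresco A E ∧
  ∃ B : Polynomial ℂ, IsBernsteinPolyOf A E B ∧
    ∀ z ∈ B.roots, ∃ n : ℕ, z = -((l : ℂ) + (n : ℂ))

/-- `F` is (a copy of) the module `Ξ_λ^(N)` of `[λ]`-primitive asymptotic
expansions : free over `ℂ[[b]]` with basis `e₀, …, e_N` satisfying
`a·e₀ = λ·b·e₀` and `a·e_j = λ·b·e_j + b·e_{j−1}`. -/
def IsXi (l : ℚ) (N : ℕ) (F : Type v) [AddCommGroup F] [Module A F] : Prop :=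
  letI := psMod A F
  ∃ e : Module.Basis (Fin (N + 1)) (PowerSeries ℂ) F,
    av A • e 0 = (algebraMap ℂ A (l : ℂ) * bv A) • e 0 ∧
    ∀ j : Fin (N + 1), 0 < (j : ℕ) →
      av A • e j = (algebraMap ℂ A (l : ℂ) * bv A) • e j +
        bv A • e ⟨(j : ℕ) - 1, lt_of_le_of_lt (Nat.sub_le _ 1) j.isLt⟩

/-- A `[λ]`-primitive theme : a `[λ]`-primitive fresco embedding in some
`Ξ_λ^(N)`. -/
def IsTheme (l : ℚ) (E : Type v) [AddCommGroup E] [Module A E] : Prop :=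
  IsPrimitiveFresco A l E ∧
  ∃ (N : ℕ) (F : ModuleCat.{v} A) (i : E →ₗ[A] F),
    IsXi A l N F ∧ Function.Injective i

/-- A semi-simple `[λ]`-primitive fresco : every `Â`-linear map to some
`Ξ_λ^(N)` has rank at most 1. -/
def IsSemiSimpleFresco (l : ℚ) (E : Type v) [AddCommGroup E] [Module A E] : Prop :=
  IsPrimitiveFresco A l E ∧
  ∀ (N : ℕ) (F : ModuleCat.{v} A), IsXi A l N F →
    ∀ f : E →ₗ[A] F,
      letI := cMod A (F : Type v)
      Module.rank ℂ (Submodule.span ℂ (Set.range f)) ≤ 1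

/-- A normal submodule : the quotient is free over `ℂ[[b]]`. -/
def IsNormal (E : Type v) [AddCommGroup E] [Module A E] (F : Submodule A E) : Prop :=
  letI := psMod A (E ⧸ F)
  Module.Free (PowerSeries ℂ) (E ⧸ F)

/-- A Jordan–Hölder sequence for `E` of length `k`, with normal terms and rank
one quotients `F_{j+1}/F_j ≅ E_{μ_j} = Â/Â·(a − μ_j·b)`. -/
def IsJHSeq (E : Type v) [AddCommGroup E] [Module A E] (k : ℕ)
    (F : ℕ → Submodule A E) (μ : ℕ → ℚ) : Prop :=
  F 0 = ⊥ ∧ F k = ⊤ ∧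
  (∀ j ≤ k, IsNormal A E (F j)) ∧
  ∀ j < k, ∃ x : E, x ∈ F (j + 1) ∧
    F (j + 1) = F j ⊔ Submodule.span A {x} ∧
    (av A - algebraMap ℂ A ((μ j : ℚ) : ℂ) * bv A) • x ∈ F j ∧
    ∀ S : PowerSeries ℂ, eB A S • x ∈ F j → S = 0

/-- The principal Jordan–Hölder sequence : the `μ_j + j` are increasing. -/
def IsPrincipalJH (E : Type v) [AddCommGroup E] [Module A E] (k : ℕ)
    (F : ℕ → Submodule A E) (μ : ℕ → ℚ) : Prop :=
  IsJHSeq A E k F μ ∧ ∀ i j : ℕ, i ≤ j → j < k → μ i + i ≤ μ j + j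

/-- `E` has fundamental invariants `μ 0, …, μ (k−1)` (the numbers attached to
its principal Jordan–Hölder sequence of length `k`). -/
def HasInvariants (E : Type v) [AddCommGroup E] [Module A E] (k : ℕ)
    (μ : ℕ → ℚ) : Prop :=
  ∃ F : ℕ → Submodule A E, IsPrincipalJH A E k F μ

/-- Dimension over `ℂ` of `Ker (a − μ·b : E → E)`. -/
def deltaKer (E : Type v) [AddCommGroup E] [Module A E] (μ : ℚ) : ℕ :=
  letI := cMod A E
  Module.finrank ℂ
    (Submodule.span ℂ {x : E | (av A - algebraMap ℂ A (μ : ℂ) * bv A) • x = 0})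

/-- The ss-depth `d(E)` : maximal rank of a normal sub-theme of `E`. -/
def HasSSDepth (l : ℚ) (E : Type v) [AddCommGroup E] [Module A E] (d : ℕ) : Prop :=
  (∃ T : Submodule A E, IsNormal A E T ∧ IsTheme A l T ∧ bRank A T = d) ∧
  ∀ T : Submodule A E, IsNormal A E T → IsTheme A l T → bRank A T ≤ d

/-- `S` is `S₁(E)`, the biggest semi-simple submodule of `E` (it is normal). -/
def IsS1 (l : ℚ) (E : Type v) [AddCommGroup E] [Module A E]
    (S : Submodule A E) : Prop :=
  IsNormal A E S ∧ IsSemiSimpleFresco A l S ∧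
  ∀ S' : Submodule A E, IsSemiSimpleFresco A l S' → S' ≤ S

/-- `S` is `Σ¹(E)`, the smallest normal submodule of `E` with semi-simple
quotient. -/
def IsSigma1 (l : ℚ) (E : Type v) [AddCommGroup E] [Module A E]
    (S : Submodule A E) : Prop :=
  IsNormal A E S ∧ IsSemiSimpleFresco A l (E ⧸ S) ∧
  ∀ S' : Submodule A E, IsNormal A E S' → IsSemiSimpleFresco A l (E ⧸ S') → S ≤ S'

/-- The module `θ_*(E)` : same underlying group, with `Â` acting through `Θ`. -/
def Twisted (_Θ : A →+* A) (E : Type v) : Type v := E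

instance Twisted.instAddCommGroup (Θ : A →+* A) (E : Type v) [AddCommGroup E] :
    AddCommGroup (Twisted A Θ E) := inferInstanceAs (AddCommGroup E)

instance Twisted.instModule (Θ : A →+* A) (E : Type v) [AddCommGroup E]
    [Module A E] : Module A (Twisted A Θ E) := Module.compHom E Θ

/-- The element `(a − λ₁·b)·(1 + z·b^p)⁻¹·(a − (λ₁+p−1)·b)` of `Â`. -/
def P2 (l₁ : ℚ) (p : ℕ) (z : ℂ) : A :=
  (av A - algebraMap ℂ A (l₁ : ℂ) * bv A) *
    eB A (1 + PowerSeries.C z * PowerSeries.X ^ p : PowerSeries ℂ)⁻¹ *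
    (av A - algebraMap ℂ A ((l₁ + p - 1 : ℚ) : ℂ) * bv A)

/-- `E` is (isomorphic to) the rank 2 theme with fundamental invariants
`(λ₁, p)` and parameter `z`, namely
`E(z) = Â/Â·(a − λ₁·b)·(1 + z·b^p)⁻¹·(a − (λ₁+p−1)·b)`. -/
def HasParam (l₁ : ℚ) (p : ℕ) (z : ℂ) (E : Type u) [AddCommGroup E]
    [Module A E] : Prop :=
  Nonempty (E ≃ₗ[A] (A ⧸ Submodule.span A {P2 A l₁ p z}))

/-- The element `(a − λ₁·b)·(1 + γ·b)⁻¹·(a − λ₂·b)·(a − λ₃·b)` of `Â`,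
where `λ₂ = λ₁ + p₁ − 1` and `λ₃ = λ₂ + p₂ − 1`. -/
def P3 (l₁ : ℚ) (p₁ p₂ : ℕ) (γ : ℂ) : A :=
  (av A - algebraMap ℂ A (l₁ : ℂ) * bv A) *
    eB A (1 + PowerSeries.C γ * PowerSeries.X : PowerSeries ℂ)⁻¹ *
    (av A - algebraMap ℂ A ((l₁ + p₁ - 1 : ℚ) : ℂ) * bv A) *
    (av A - algebraMap ℂ A ((l₁ + p₁ + p₂ - 2 : ℚ) : ℂ) * bv A)

/-- The rank 3 fresco `E(γ) = Â/Â·(a − λ₁·b)·(1 + γ·b)⁻¹·(a − λ₂·b)·(a − λ₃·b)`. -/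
def E3 (l₁ : ℚ) (p₁ p₂ : ℕ) (γ : ℂ) : Type u :=
  A ⧸ Submodule.span A {P3 A l₁ p₁ p₂ γ}

instance (l₁ : ℚ) (p₁ p₂ : ℕ) (γ : ℂ) : AddCommGroup (E3 A l₁ p₁ p₂ γ) :=
  inferInstanceAs (AddCommGroup (A ⧸ Submodule.span A {P3 A l₁ p₁ p₂ γ}))

instance (l₁ : ℚ) (p₁ p₂ : ℕ) (γ : ℂ) : Module A (E3 A l₁ p₁ p₂ γ) :=
  inferInstanceAs (Module A (A ⧸ Submodule.span A {P3 A l₁ p₁ p₂ γ}))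

end AHat

namespace AHat

lemma eq_zero_of_nsmul_eq_zero (A : Type u) [Ring A] [Algebra ℂ A] {E : Type v}
    [AddCommGroup E] [Module A E] {c : ℕ} (hc : c ≠ 0) {x : E} (h : c • x = 0) : x = 0 := by
  have hunit : IsUnit (algebraMap ℂ A c) :=
    (isUnit_iff_ne_zero.mpr (Nat.cast_ne_zero.mpr hc)).map _
  rwa [← Nat.cast_smul_eq_nsmul A, ← map_natCast (algebraMap ℂ A), hunit.smul_eq_zero] at h

variable {A : Type u} [Ring A] [Algebra ℂ A] [AHatAlgebra A]
variable {E : Type v} [AddCommGroup E] [Module A E]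

lemma av_mul_bv : av A * bv A = bv A * av A + bv A ^ 2 :=
  eq_add_of_sub_eq' AHatAlgebra.comm_ab

lemma av_mul_bv_pow (j : ℕ) : av A * bv A ^ j = bv A ^ j * av A + j • bv A ^ (j + 1) := by
  induction j with
  | zero => simp
  | succ j ih =>
    rw [pow_succ, ← mul_assoc, ih, add_mul, mul_assoc, av_mul_bv, mul_add, ← mul_assoc,
      ← pow_succ, smul_mul_assoc, ← pow_succ, ← pow_add, succ_nsmul]
    abel

lemma av_smul_bv_pow_smul (j : ℕ) (x : E) :
    av A • bv A ^ j • x = bv A ^ j • av A • x + j • bv A ^ (j + 1) • x := by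
  rw [← mul_smul, av_mul_bv_pow, add_smul, mul_smul, smul_assoc]

lemma eA_X : eA A X = av A := AHatAlgebra.embA_X

lemma eA_mul_av_pow (P : PowerSeries ℂ) (n : ℕ) : eA A P * av A ^ n = av A ^ n * eA A P := by
  rw [← eA_X, ← map_pow, ← map_mul, ← map_mul, mul_comm]

lemma eB_X_pow (ν : ℕ) : eB A (X ^ ν) = bv A ^ ν := by
  rw [map_pow]
  exact congrArg (· ^ ν) AHatAlgebra.embB_X

variable (A E) in
/-- `T_a(E)`. -/
def aTorsion : AddSubgroup E where
  carrier := {x | ∃ n : ℕ, av A ^ n • x = 0}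
  zero_mem' := ⟨0, smul_zero _⟩
  add_mem' := by
    rintro x y ⟨m, hm⟩ ⟨n, hn⟩
    have hmx : av A ^ (m + n) • x = 0 := by rw [add_comm, pow_add, mul_smul, hm, smul_zero]
    have hny : av A ^ (m + n) • y = 0 := by rw [pow_add, mul_smul, hn, smul_zero]
    exact ⟨m + n, by rw [smul_add, hmx, hny, add_zero]⟩
  neg_mem' := by
    rintro x ⟨n, hn⟩
    exact ⟨n, by rw [smul_neg, hn, neg_zero]⟩

lemma eA_smul_mem_aTorsion (P : PowerSeries ℂ) {x : E} (hx : x ∈ aTorsion A E) :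
    eA A P • x ∈ aTorsion A E := by
  obtain ⟨n, hn⟩ := hx
  exact ⟨n, by rw [← mul_smul, ← eA_mul_av_pow, mul_smul, hn, smul_zero]⟩

lemma av_smul_mem_aTorsion {x : E} (hx : x ∈ aTorsion A E) : av A • x ∈ aTorsion A E := by
  simpa only [eA_X] using eA_smul_mem_aTorsion X hx

lemma bv_pow_smul_eq_zero_of_av_smul_eq (m : ℕ) :
    ∀ (c : ℕ) (z : E), c ≠ 0 → av A • z = c • bv A • z → av A ^ m • z = 0 →
      bv A ^ m • z = 0 := by
  induction m with
  | zero => simp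
  | succ m ih =>
    intro c z hc hz hmz
    have hbz : av A • bv A • z = (c + 1) • bv A • bv A • z := by
      have hab : av A • bv A • z = bv A • av A • z + bv A • bv A • z := by
        rw [← mul_smul, av_mul_bv, add_smul, pow_two, mul_smul, mul_smul]
      rw [hab, hz, smul_comm (bv A) c, add_smul, one_smul]
    have hm : av A ^ m • bv A • z = 0 := by
      rw [pow_succ, mul_smul, hz, smul_comm] at hmz
      exact eq_zero_of_nsmul_eq_zero A hc hmz
    rw [pow_succ, mul_smul]
    exact ih (c + 1) _ c.succ_ne_zero hbz hm

lemma exists_bv_pow_smul_eq_zero (n : ℕ) :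
    ∀ x : E, av A ^ n • x = 0 → (∀ ν : ℕ, bv A ^ ν • x ∈ aTorsion A E) →
      ∃ L : ℕ, bv A ^ L • x = 0 := by
  induction n with
  | zero => exact fun x hx _ => ⟨0, by rwa [pow_zero] at hx ⊢⟩
  | succ n ih =>
    intro x hnx hx
    have hax : ∀ ν : ℕ, bv A ^ ν • av A • x ∈ aTorsion A E := by
      intro ν
      rw [eq_sub_of_add_eq (av_smul_bv_pow_smul ν x).symm]
      exact sub_mem (av_smul_mem_aTorsion (hx ν)) (nsmul_mem (hx (ν + 1)) ν)
    obtain ⟨L, hL⟩ := ih (av A • x) (by rwa [← mul_smul, ← pow_succ]) hax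
    obtain ⟨m, hm⟩ := hx (L + 1)
    have hz : av A • bv A ^ (L + 1) • x = (L + 1) • bv A • bv A ^ (L + 1) • x := by
      rw [av_smul_bv_pow_smul, pow_succ' _ L, mul_smul, hL, smul_zero, zero_add, pow_succ',
        pow_succ', mul_smul, mul_smul]
    refine ⟨m + (L + 1), ?_⟩
    rw [pow_add, mul_smul]
    exact bv_pow_smul_eq_zero_of_av_smul_eq m (L + 1) _ L.succ_ne_zero hz hm

lemma smul_mem_aTorsion_of_bv_pow_smul_mem {x : E}
    (hx : ∀ ν : ℕ, bv A ^ ν • x ∈ aTorsion A E) (w : A) : w • x ∈ aTorsion A E := by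
  obtain ⟨n, hn⟩ := hx 0
  rw [pow_zero, one_smul] at hn
  obtain ⟨L, hL⟩ := exists_bv_pow_smul_eq_zero n x hn hx
  obtain ⟨y, hw⟩ := AHatAlgebra.expand w L
  rw [hw, add_smul, mul_smul y, show AHatAlgebra.b = bv A from rfl, hL, smul_zero, add_zero,
    Finset.sum_smul]
  exact sum_mem fun ν _ => by rw [mul_smul]; exact eA_smul_mem_aTorsion _ (hx ν)

variable (A E) in
/-- `T̂_a(E)`. -/
def hatATorsion : Submodule A E where
  carrier := {x | ∀ S : PowerSeries ℂ, eB A S • x ∈ aTorsion A E}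
  zero_mem' S := by rw [smul_zero]; exact zero_mem _
  add_mem' hx hy S := by rw [smul_add]; exact add_mem (hx S) (hy S)
  smul_mem' c x hx S := by
    rw [← mul_smul]
    exact smul_mem_aTorsion_of_bv_pow_smul_mem (fun ν => eB_X_pow (A := A) ν ▸ hx (X ^ ν)) _

end AHat

open AHat in
/-- For any left `Â`-module `E`, the subset
`T̂_a(E) = { x ∈ E : ℂ[[b]]·x ⊂ T_a(E) }` is a sub-`Â`-module of `E`, and it is
the largest sub-`Â`-module of `E` contained in `T_a(E)`. -/
theorem statement5 (A : Type u) [Ring A] [Algebra ℂ A] [AHatAlgebra A]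
    (E : Type v) [AddCommGroup E] [Module A E]
    (Ta hatTa : Set E)
    (hTa : Ta = {x : E | ∃ n : ℕ, (av A ^ n) • x = 0})
    (hhatTa : hatTa = {x : E | ∀ S : PowerSeries ℂ, eB A S • x ∈ Ta}) :
    (∃ M : Submodule A E, (M : Set E) = hatTa) ∧
    hatTa ⊆ Ta ∧
    ∀ M : Submodule A E, (M : Set E) ⊆ Ta → (M : Set E) ⊆ hatTa := by
  subst hhatTa hTa
  refine ⟨⟨hatATorsion A E, rfl⟩, fun x hx => ?_, fun M hM x hx S => hM (M.smul_mem _ hx)⟩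
  simpa only [map_one, one_smul] using hx 1
end
end

section
/- Let E be a simple pole (a,b)-module of rank n over ℂ[[b]] admitting a ℂ[[b]]-basis e = (e₁, …, e_n) such that a·e ≡ b·(λ·Id_n + N)·e modulo b²·E, where λ ∈ ℂ and N is the principal nilpotent matrix with N(e_j) = e_{j+1} for j < n and N(e_n) = 0. Then there exists a ℂ[[b]]-basis ε = (ε₁, …, ε_n) of E such that a·ε = b·(λ·Id_n + N)·ε holds exactly. -/
/- Axiomatized framework for Barlet's algebra `Â` and its (a,b)-modules. -/

open PowerSeries

noncomputable section

universe u v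

/-! Because `a b - b a = b²`, the element `a` acts on `E` through the Leibniz rule
`a (S x) = S (a x) + b² S' x` for `S ∈ ℂ[[b]]`: the defect of this rule for `S = c + b T` is `b`
times the defect for `T`, so it lies in `⋂ bᵏ E = 0`. Hence if `a` has matrix `M` in a basis `e`,
it has matrix `B` in the basis `e S` as soon as `M S + b² S' = S B`. For `M = b (λ + N) + b² V` and
`B = b (λ + N)` this is `N S - S N + b (V S + S') = 0`, solved coefficientwise with `S(0) = 1`:
`((m + 1) + ad N) Sₘ₊₁` is prescribed by the earlier coefficients, and `(m + 1) + ad N` is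
invertible since `ad N` is nilpotent. -/

open Finset

namespace Matrix

variable {R : Type*} [CommSemiring R] {l m o : Type*} [Fintype m]

lemma map_coeff_mul (M : Matrix l m R⟦X⟧) (M' : Matrix m o R⟦X⟧) (k : ℕ) :
    (M * M').map (coeff k) =
      ∑ pq ∈ antidiagonal k, M.map (coeff pq.1) * M'.map (coeff pq.2) := by
  ext i j
  simp only [map_apply, mul_apply, map_sum, coeff_mul, sum_apply]
  exact Finset.sum_comm

lemma ext_coeff {M M' : Matrix l o R⟦X⟧} (h : ∀ k, M.map (coeff k) = M'.map (coeff k)) :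
    M = M' := by
  ext i j k
  exact congrFun (congrFun (h k) i) j

lemma map_coeff_C_mul (N : Matrix l m R) (M : Matrix m o R⟦X⟧) (k : ℕ) :
    (N.map C * M).map (coeff k) = N * M.map (coeff k) := by
  ext i j
  simp only [map_apply, mul_apply, map_sum, coeff_C_mul]

lemma map_coeff_mul_C (M : Matrix l m R⟦X⟧) (N : Matrix m o R) (k : ℕ) :
    (M * N.map C).map (coeff k) = M.map (coeff k) * N := by
  ext i j
  simp only [map_apply, mul_apply, map_sum, coeff_mul_C]

lemma map_coeff_zero_X_smul (M : Matrix l o R⟦X⟧) : ((X : R⟦X⟧) • M).map (coeff 0) = 0 := by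
  ext i j
  simp only [map_apply, smul_apply, smul_eq_mul, coeff_zero_X_mul, zero_apply]

lemma map_coeff_succ_X_smul (M : Matrix l o R⟦X⟧) (k : ℕ) :
    ((X : R⟦X⟧) • M).map (coeff (k + 1)) = M.map (coeff k) := by
  ext i j
  simp only [map_apply, smul_apply, smul_eq_mul, coeff_succ_X_mul]

lemma map_coeff_map_derivative (M : Matrix l o R⟦X⟧) (k : ℕ) :
    (M.map (d⁄dX R)).map (coeff k) = ((k : R) + 1) • M.map (coeff (k + 1)) := by
  ext i j
  simp only [map_apply, smul_apply, smul_eq_mul, coeff_derivative, mul_comm]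

end Matrix

lemma Matrix.isUnit_det_of_map_constantCoeff {R : Type*} [CommRing R] {ι : Type*} [Fintype ι]
    [DecidableEq ι] {M : Matrix ι ι R⟦X⟧} (h : M.map constantCoeff = 1) : IsUnit M.det := by
  rw [isUnit_iff_constantCoeff, RingHom.map_det, RingHom.mapMatrix_apply, h, Matrix.det_one]
  exact isUnit_one

section GaugeTransformation

variable {K : Type*} [Field K] {ι : Type*} [Fintype ι] [DecidableEq ι]

lemma isUnit_algebraMap_add_commutator {N : Matrix ι ι K} (hN : IsNilpotent N) {c : K}
    (hc : c ≠ 0) :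
    IsUnit (algebraMap K (Module.End K (Matrix ι ι K)) c +
      (LinearMap.mulLeft K N - LinearMap.mulRight K N)) :=
  ((LinearMap.commute_mulLeft_right N N).isNilpotent_sub
      ((LinearMap.isNilpotent_mulLeft_iff K N).mpr hN)
      ((LinearMap.isNilpotent_mulRight_iff K N).mpr hN)).isUnit_add_left_of_commute
    ((isUnit_iff_ne_zero.mpr hc).map _) (Algebra.commutes c _).symm

/-- The coefficients of the solution `S = ∑ Sₘ Xᵐ` of `N S - S N + X (U S + S') = 0` with
`S₀ = 1`, where `U = ∑ Uₚ Xᵖ`. -/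
def gaugeCoeff (N : Matrix ι ι K) (U : ℕ → Matrix ι ι K) : ℕ → Matrix ι ι K
  | 0 => 1
  | m + 1 => -Ring.inverse (algebraMap K (Module.End K (Matrix ι ι K)) (m + 1) +
      (LinearMap.mulLeft K N - LinearMap.mulRight K N))
        (∑ pq ∈ (antidiagonal m).attach, U pq.1.1 * gaugeCoeff N U pq.1.2)
  decreasing_by have := mem_antidiagonal.mp pq.2; omega

lemma gaugeCoeff_succ [CharZero K] {N : Matrix ι ι K} (hN : IsNilpotent N)
    (U : ℕ → Matrix ι ι K) (m : ℕ) :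
    N * gaugeCoeff N U (m + 1) - gaugeCoeff N U (m + 1) * N +
        ((m : K) + 1) • gaugeCoeff N U (m + 1) =
      -∑ pq ∈ antidiagonal m, U pq.1 * gaugeCoeff N U pq.2 := by
  set L := algebraMap K (Module.End K (Matrix ι ι K)) (m + 1) +
    (LinearMap.mulLeft K N - LinearMap.mulRight K N)
  have hL : L * Ring.inverse L = 1 := Ring.mul_inverse_cancel L
    (isUnit_algebraMap_add_commutator hN (Nat.cast_add_one_ne_zero m))
  have key := congrArg (· (-∑ pq ∈ antidiagonal m, U pq.1 * gaugeCoeff N U pq.2)) hL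
  rw [Module.End.mul_apply, Module.End.one_apply, map_neg] at key
  rw [gaugeCoeff, Finset.sum_attach (antidiagonal m) (fun pq => U pq.1 * gaugeCoeff N U pq.2),
    ← key]
  simp only [L, LinearMap.add_apply, LinearMap.sub_apply, Module.algebraMap_end_apply,
    LinearMap.mulLeft_apply, LinearMap.mulRight_apply, map_neg, mul_neg, neg_mul, smul_neg]
  abel

theorem exists_gauge_transformation [CharZero K] {N : Matrix ι ι K} (hN : IsNilpotent N)
    (V : Matrix ι ι K⟦X⟧) :
    ∃ S : Matrix ι ι K⟦X⟧, S.map constantCoeff = 1 ∧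
      N.map C * S + (X : K⟦X⟧) • (V * S + S.map (d⁄dX K)) = S * N.map C := by
  set G := gaugeCoeff N (fun p => V.map (coeff p))
  set S : Matrix ι ι K⟦X⟧ := Matrix.of fun i j => mk fun k => G k i j
  have hS : ∀ k, S.map (coeff k) = G k := fun k => by ext i j; simp [S]
  have hG0 : G 0 = 1 := gaugeCoeff.eq_1 _ _
  refine ⟨S, ?_, Matrix.ext_coeff ?_⟩
  · rw [← hG0, ← hS 0]
    ext i j
    simp
  rintro (_ | k)
  · rw [Matrix.map_add _ (map_add _), Matrix.map_coeff_C_mul, Matrix.map_coeff_zero_X_smul,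
      Matrix.map_coeff_mul_C, hS, hG0, Matrix.mul_one, Matrix.one_mul, add_zero]
  · have hsum := neg_eq_iff_eq_neg.mp (gaugeCoeff_succ hN (fun p => V.map (coeff p)) k).symm
    rw [Matrix.map_add _ (map_add _), Matrix.map_coeff_C_mul, Matrix.map_coeff_succ_X_smul,
      Matrix.map_add _ (map_add _), Matrix.map_coeff_mul, Matrix.map_coeff_map_derivative,
      Matrix.map_coeff_mul_C]
    simp only [hS]
    rw [hsum]
    abel

end GaugeTransformation

def shiftMatrix (R : Type*) [Zero R] [One R] (n : ℕ) : Matrix (Fin n) (Fin n) R :=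
  Matrix.of fun i j => if (i : ℕ) = j + 1 then 1 else 0

lemma isNilpotent_shiftMatrix (R : Type*) [CommRing R] (n : ℕ) :
    IsNilpotent (shiftMatrix R n) := by
  have hU : (shiftMatrix R n).transpose.IsUpperTriangular := fun i j hij => by
    simp only [shiftMatrix, Matrix.transpose_apply, Matrix.of_apply]
    rw [if_neg (by have : (j : ℕ) < i := hij; omega)]
  have hpow := Matrix.aeval_self_charpoly (shiftMatrix R n).transpose
  rw [Matrix.charpoly_of_isUpperTriangular _ hU] at hpow
  refine ⟨n, ?_⟩
  simpa [shiftMatrix, ← Matrix.transpose_pow] using hpow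

lemma sum_X_smul_jordan_smul {R M : Type*} [CommSemiring R] [AddCommMonoid M] [Module R⟦X⟧ M]
    {n : ℕ} (c : R) (v : Fin n → M) (j : Fin n) :
    ∑ k, ((X : R⟦X⟧) • (C c • (1 : Matrix (Fin n) (Fin n) R⟦X⟧) + (shiftMatrix R n).map C)) k j •
        v k =
      (C c * X) • v j + if h : (j : ℕ) + 1 < n then (X : R⟦X⟧) • v ⟨(j : ℕ) + 1, h⟩ else 0 := by
  simp only [Matrix.smul_apply, Matrix.add_apply, Matrix.one_apply, Matrix.map_apply, shiftMatrix,
    Matrix.of_apply, smul_eq_mul, mul_add, add_smul, Finset.sum_add_distrib]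
  congr 1
  · simp [mul_comm]
  · split_ifs with h
    · rw [Finset.sum_eq_single ⟨(j : ℕ) + 1, h⟩
        (fun k _ hk => by simp only [ne_eq, Fin.ext_iff] at hk; simp [hk]) (by simp)]
      simp
    · refine Finset.sum_eq_zero fun k _ => ?_
      have : (k : ℕ) ≠ j + 1 := by omega
      simp [this]

lemma Module.Basis.eq_zero_of_forall_X_pow_smul {R M ι : Type*} [CommRing R] [AddCommGroup M]
    [Module R⟦X⟧ M] (e : Module.Basis ι R⟦X⟧ M) {z : M}
    (hz : ∀ N : ℕ, ∃ w : M, z = (X ^ N : R⟦X⟧) • w) : z = 0 := by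
  refine e.ext_elem fun i => PowerSeries.ext fun m => ?_
  obtain ⟨w, rfl⟩ := hz (m + 1)
  rw [map_smul, Finsupp.smul_apply, smul_eq_mul, map_zero, Finsupp.zero_apply, map_zero]
  exact X_pow_dvd_iff.mp (dvd_mul_right _ _) m (Nat.lt_succ_self m)

section LeibnizRule

open AHat

variable {A : Type u} [Ring A] [Algebra ℂ A] [AHatAlgebra A]
  {E : Type v} [AddCommGroup E] [Module A E] [Module ℂ⟦X⟧ E]

lemma X_pow_smul_eq_bv_pow_smul (hcomp : ∀ (S : ℂ⟦X⟧) (x : E), S • x = eB A S • x) (k : ℕ)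
    (x : E) : (X ^ k : ℂ⟦X⟧) • x = bv A ^ k • x := by
  rw [hcomp, map_pow, eB, AHatAlgebra.embB_X, bv]

lemma bv_smul_eq_X_smul (hcomp : ∀ (S : ℂ⟦X⟧) (x : E), S • x = eB A S • x) (x : E) :
    bv A • x = (X : ℂ⟦X⟧) • x := by
  simpa using (X_pow_smul_eq_bv_pow_smul hcomp 1 x).symm

lemma algebraMap_smul_eq_C_smul (hcomp : ∀ (S : ℂ⟦X⟧) (x : E), S • x = eB A S • x) (c : ℂ)
    (x : E) : algebraMap ℂ A c • x = (C c : ℂ⟦X⟧) • x := by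
  rw [hcomp, ← (eB A).commutes c]
  rfl

lemma av_smul_C_smul (hcomp : ∀ (S : ℂ⟦X⟧) (x : E), S • x = eB A S • x) (c : ℂ) (x : E) :
    av A • ((C c : ℂ⟦X⟧) • x) = (C c : ℂ⟦X⟧) • (av A • x) := by
  rw [← algebraMap_smul_eq_C_smul hcomp, ← algebraMap_smul_eq_C_smul hcomp, smul_smul, smul_smul,
    Algebra.commutes]

lemma av_smul_X_smul (hcomp : ∀ (S : ℂ⟦X⟧) (x : E), S • x = eB A S • x) (x : E) :
    av A • ((X : ℂ⟦X⟧) • x) = (X : ℂ⟦X⟧) • (av A • x) + (X ^ 2 : ℂ⟦X⟧) • x := by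
  have hab : av A * bv A = bv A * av A + bv A ^ 2 := sub_eq_iff_eq_add'.mp AHatAlgebra.comm_ab
  rw [← bv_smul_eq_X_smul hcomp, ← bv_smul_eq_X_smul hcomp, X_pow_smul_eq_bv_pow_smul hcomp,
    smul_smul, smul_smul, hab, add_smul]

variable (A) in
def leibnizDefect (S : ℂ⟦X⟧) (x : E) : E :=
  av A • (S • x) - S • (av A • x) - (X ^ 2 * d⁄dX ℂ S) • x

lemma leibnizDefect_C_add_X_mul (hcomp : ∀ (S : ℂ⟦X⟧) (x : E), S • x = eB A S • x) (c : ℂ)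
    (T : ℂ⟦X⟧) (x : E) :
    leibnizDefect A (C c + X * T) x = (X : ℂ⟦X⟧) • leibnizDefect A T x := by
  have hd : X ^ 2 * d⁄dX ℂ (C c + X * T) = X ^ 2 * T + X * (X ^ 2 * d⁄dX ℂ T) := by
    rw [map_add, derivative_C, Derivation.leibniz, derivative_X]
    simp only [smul_eq_mul]
    ring
  simp only [leibnizDefect, hd, add_smul, mul_smul, smul_add, smul_sub, av_smul_C_smul hcomp,
    av_smul_X_smul hcomp]
  abel

lemma exists_leibnizDefect_eq_X_pow_smul (hcomp : ∀ (S : ℂ⟦X⟧) (x : E), S • x = eB A S • x) (N : ℕ)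
    (S : ℂ⟦X⟧) (x : E) : ∃ w : E, leibnizDefect A S x = (X ^ N : ℂ⟦X⟧) • w := by
  induction N generalizing S with
  | zero => exact ⟨leibnizDefect A S x, by rw [pow_zero, one_smul]⟩
  | succ N ih =>
    obtain ⟨w, hw⟩ := ih (mk fun p => coeff (p + 1) S)
    refine ⟨w, ?_⟩
    rw [eq_X_mul_shift_add_const S, add_comm, leibnizDefect_C_add_X_mul hcomp, hw, smul_smul,
      pow_succ']

theorem av_smul_smul (hcomp : ∀ (S : ℂ⟦X⟧) (x : E), S • x = eB A S • x) {ι : Type*}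
    (e : Module.Basis ι ℂ⟦X⟧ E) (S : ℂ⟦X⟧) (x : E) :
    av A • (S • x) = S • (av A • x) + (X ^ 2 * d⁄dX ℂ S) • x := by
  have h := e.eq_zero_of_forall_X_pow_smul fun N => exists_leibnizDefect_eq_X_pow_smul hcomp N S x
  rwa [leibnizDefect, sub_sub, sub_eq_zero] at h

variable {ι : Type*} [Fintype ι]

lemma av_smul_sum_smul (hcomp : ∀ (S : ℂ⟦X⟧) (x : E), S • x = eB A S • x)
    (e : Module.Basis ι ℂ⟦X⟧ E) {M : Matrix ι ι ℂ⟦X⟧} (hM : ∀ i, av A • e i = ∑ k, M k i • e k)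
    (S : Matrix ι ι ℂ⟦X⟧) (j : ι) :
    av A • ∑ i, S i j • e i = ∑ k, (M * S + (X ^ 2 : ℂ⟦X⟧) • S.map (d⁄dX ℂ)) k j • e k := by
  simp only [Finset.smul_sum, av_smul_smul hcomp e, hM, Finset.sum_add_distrib, Matrix.add_apply,
    add_smul, Matrix.mul_apply, Finset.sum_smul, smul_smul, Matrix.smul_apply, Matrix.map_apply,
    smul_eq_mul]
  rw [Finset.sum_comm]
  simp only [mul_comm]

theorem av_smul_basis_map [DecidableEq ι] (hcomp : ∀ (S : ℂ⟦X⟧) (x : E), S • x = eB A S • x)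
    (e : Module.Basis ι ℂ⟦X⟧ E) {M S B : Matrix ι ι ℂ⟦X⟧} (hS : IsUnit S.det)
    (hM : ∀ i, av A • e i = ∑ k, M k i • e k)
    (hSB : M * S + (X ^ 2 : ℂ⟦X⟧) • S.map (d⁄dX ℂ) = S * B) (j : ι) :
    av A • e.map (S.toLinearEquiv e hS) j = ∑ k, B k j • e.map (S.toLinearEquiv e hS) k := by
  simp only [Module.Basis.map_apply, Matrix.toLinearEquiv_apply]
  rw [Matrix.toLin_self, av_smul_sum_smul hcomp e hM, hSB, ← Matrix.toLin_self e,
    Matrix.toLin_mul e e e, LinearMap.comp_apply, Matrix.toLin_self, map_sum]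
  simp only [map_smul]

end LeibnizRule

open AHat in
theorem statement11_general (A : Type u) [Ring A] [Algebra ℂ A] [AHatAlgebra A]
    (E : Type v) [AddCommGroup E] [Module A E]
    [Module (PowerSeries ℂ) E]
    (hcomp : ∀ (S : PowerSeries ℂ) (x : E), S • x = eB A S • x)
    (n : ℕ)
    (l : ℂ) (e : Module.Basis (Fin n) (PowerSeries ℂ) E)
    (he : ∀ j : Fin n, ∃ y : E,
      av A • e j - ((algebraMap ℂ A l * bv A) • e j +
        (if h : (j : ℕ) + 1 < n then bv A • e (⟨(j : ℕ) + 1, h⟩ : Fin n) else 0)) =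
        (bv A ^ 2) • y) :
    ∃ ε : Module.Basis (Fin n) (PowerSeries ℂ) E, ∀ j : Fin n,
      av A • ε j = (algebraMap ℂ A l * bv A) • ε j +
        (if h : (j : ℕ) + 1 < n then bv A • ε (⟨(j : ℕ) + 1, h⟩ : Fin n) else 0) := by
  choose y hy using he
  set V : Matrix (Fin n) (Fin n) ℂ⟦X⟧ := Matrix.of fun k i => e.repr (y i) k
  set B : Matrix (Fin n) (Fin n) ℂ⟦X⟧ := (X : ℂ⟦X⟧) • (C l • 1 + (shiftMatrix ℂ n).map C)
  have jordan : ∀ (v : Fin n → E) (j : Fin n), ∑ k, B k j • v k =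
      (algebraMap ℂ A l * bv A) • v j +
        (if h : (j : ℕ) + 1 < n then bv A • v ⟨(j : ℕ) + 1, h⟩ else 0) := fun v j => by
    simp only [B, sum_X_smul_jordan_smul, mul_smul, algebraMap_smul_eq_C_smul hcomp,
      bv_smul_eq_X_smul hcomp]
  have hM : ∀ i, av A • e i = ∑ k, (B + (X ^ 2 : ℂ⟦X⟧) • V) k i • e k := fun i => by
    simp only [Matrix.add_apply, add_smul, Finset.sum_add_distrib, jordan, Matrix.smul_apply,
      smul_eq_mul, mul_smul (X ^ 2 : ℂ⟦X⟧), ← Finset.smul_sum, V, Matrix.of_apply, e.sum_repr,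
      X_pow_smul_eq_bv_pow_smul hcomp]
    exact sub_eq_iff_eq_add'.mp (hy i)
  obtain ⟨S, hS0, hS⟩ := exists_gauge_transformation (isNilpotent_shiftMatrix ℂ n) V
  have hSB : (B + (X ^ 2 : ℂ⟦X⟧) • V) * S + (X ^ 2 : ℂ⟦X⟧) • S.map (d⁄dX ℂ) = S * B := by
    have hX := congrArg ((X * C l) • S + (X : ℂ⟦X⟧) • ·) hS
    simp only [B, Matrix.mul_smul, Matrix.smul_mul, Matrix.add_mul, Matrix.mul_add, smul_add,
      Matrix.mul_one, Matrix.one_mul, smul_smul, pow_two] at hX ⊢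
    rw [← hX]
    abel
  exact ⟨_, fun j => (av_smul_basis_map hcomp e (Matrix.isUnit_det_of_map_constantCoeff hS0) hM
    hSB j).trans (jordan _ j)⟩

open AHat in
/-- If a simple pole (a,b)-module `E` of rank `n` over `ℂ[[b]]` admits a
`ℂ[[b]]`-basis `e` with `a·e ≡ b·(λ·Id + N)·e` modulo `b²·E` (where
`N e_j = e_{j+1}`, `N e_n = 0`), then it admits a `ℂ[[b]]`-basis `ε` with
`a·ε = b·(λ·Id + N)·ε` exactly. -/
theorem statement11 (A : Type u) [Ring A] [Algebra ℂ A] [AHatAlgebra A]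
    (E : Type v) [AddCommGroup E] [Module A E]
    [Module (PowerSeries ℂ) E]
    (hcomp : ∀ (S : PowerSeries ℂ) (x : E), S • x = eB A S • x)
    (hE : IsSimplePole A E)
    (n : ℕ) (hn : Module.finrank (PowerSeries ℂ) E = n)
    (l : ℂ) (e : Module.Basis (Fin n) (PowerSeries ℂ) E)
    (he : ∀ j : Fin n, ∃ y : E,
      av A • e j - ((algebraMap ℂ A l * bv A) • e j +
        (if h : (j : ℕ) + 1 < n then bv A • e (⟨(j : ℕ) + 1, h⟩ : Fin n) else 0)) =
        (bv A ^ 2) • y) :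
    ∃ ε : Module.Basis (Fin n) (PowerSeries ℂ) E, ∀ j : Fin n,
      av A • ε j = (algebraMap ℂ A l * bv A) • ε j +
        (if h : (j : ℕ) + 1 < n then bv A • ε (⟨(j : ℕ) + 1, h⟩ : Fin n) else 0) :=
  statement11_general A E hcomp n l e he
end
end
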